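/- arXiv:2504.12548 — 3 statements merged into one kernel-verified Lean document; each statement's English description precedes it below -/
import Mathlib

section
/- Let f : ℝ → ℝ be continuous, strictly increasing with f(0) = 0, and let F(t) = ∫₀ᵗ f(s) ds. Suppose lim_{t→0⁺} t·f(t)/F(t) = ω with ω ∈ [1,2), and suppose h(t) = ∫₀ᵗ F(s)^(-1/2) ds is finite for all t ≥ 0. Then lim_{t→0⁺} t/(√(F(t)) · h(t)) = 1 - ω/2. -/
/-!
L'Hôpital's rule at `0⁺` for `p t = t / √(F t)` over `h`: since `h' = F^{-1/2}` and
`p' = F^{-1/2} · (1 - t f(t) / (2 F(t)))`, the ratio of derivatives tends to `1 - ω/2`.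
Both `p` and `h` tend to `0`, `p` because `0 ≤ p ≤ h`, as `F^{-1/2}` is antitone on `(0, t]`.
-/

open MeasureTheory Set Filter Topology

section Primitive

variable {f : ℝ → ℝ}

theorem integral_pos_of_pos_on_Ioi (hf : Continuous f) (hpos : ∀ x > 0, 0 < f x) {t : ℝ}
    (ht : 0 < t) : 0 < ∫ s in (0:ℝ)..t, f s :=
  intervalIntegral.intervalIntegral_pos_of_pos_on (hf.intervalIntegrable 0 t)
    (fun s hs => hpos s hs.1) ht

theorem monotoneOn_integral_of_pos_on_Ioi (hf : Continuous f) (hpos : ∀ x > 0, 0 < f x) :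
    MonotoneOn (fun t => ∫ s in (0:ℝ)..t, f s) (Ioi 0) := by
  intro s hs t _ hst
  have hdiff : (∫ u in (0:ℝ)..t, f u) - ∫ u in (0:ℝ)..s, f u = ∫ u in s..t, f u :=
    intervalIntegral.integral_interval_sub_left (hf.intervalIntegrable 0 t)
      (hf.intervalIntegrable 0 s)
  have : 0 ≤ ∫ u in s..t, f u :=
    intervalIntegral.integral_nonneg hst fun u hu => (hpos u (lt_of_lt_of_le hs hu.1)).le
  dsimp only
  linarith

end Primitive

theorem tendsto_integral_nhdsGT_zero {g : ℝ → ℝ} (hg : IntegrableOn g (Ioc 0 1)) :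
    Tendsto (fun t => ∫ s in (0:ℝ)..t, g s) (𝓝[>] 0) (𝓝 0) := by
  have hcont : ContinuousWithinAt (fun t => ∫ s in (0:ℝ)..t, g s) (Icc 0 1) 0 :=
    intervalIntegral.continuousWithinAt_primitive (by simp)
      (by simpa [intervalIntegrable_iff_integrableOn_Ioc_of_le] using hg)
  simpa using (hcont.mono_of_mem_nhdsWithin (Icc_mem_nhdsGT one_pos)).tendsto

section SqrtPrimitive

variable {F f : ℝ → ℝ}

theorem hasDerivAt_div_sqrt {x : ℝ} (hF : HasDerivAt F (f x) x) (hFx : 0 < F x) :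
    HasDerivAt (fun t => t / √(F t)) ((1 - x * f x / F x / 2) * (√(F x))⁻¹) x := by
  have hsq : 0 < √(F x) := Real.sqrt_pos.mpr hFx
  refine ((hasDerivAt_id' x).div (hF.sqrt hFx.ne') hsq.ne').congr_deriv ?_
  field_simp
  rw [Real.sq_sqrt hFx.le]
  ring

theorem rpow_neg_half_eq_inv_sqrt {y : ℝ} (hy : 0 ≤ y) : y ^ (-(1:ℝ)/2) = (√y)⁻¹ := by
  rw [Real.sqrt_eq_rpow, ← Real.rpow_neg hy]
  norm_num

theorem hasDerivAt_integral_rpow_neg_half (hF : Continuous F) (hFpos : ∀ x > 0, 0 < F x)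
    (hint : ∀ t > 0, IntegrableOn (fun s => F s ^ (-(1:ℝ)/2)) (Ioc 0 t)) {x : ℝ}
    (hx : 0 < x) :
    HasDerivAt (fun t => ∫ s in (0:ℝ)..t, F s ^ (-(1:ℝ)/2)) (√(F x))⁻¹ x := by
  rw [← rpow_neg_half_eq_inv_sqrt (hFpos x hx).le]
  refine intervalIntegral.integral_hasDerivAt_right
    ((intervalIntegrable_iff_integrableOn_Ioc_of_le hx.le).mpr (hint x hx))
    ((hF.measurable.pow_const _).stronglyMeasurable.stronglyMeasurableAtFilter) ?_
  exact hF.continuousAt.rpow_const (Or.inl (hFpos x hx).ne')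

theorem div_sqrt_le_integral_rpow_neg_half (hFpos : ∀ x > 0, 0 < F x)
    (hFmono : MonotoneOn F (Ioi 0)) {t : ℝ} (ht : 0 < t)
    (hint : IntegrableOn (fun s => F s ^ (-(1:ℝ)/2)) (Ioc 0 t)) :
    t / √(F t) ≤ ∫ s in (0:ℝ)..t, F s ^ (-(1:ℝ)/2) := by
  have hle : ∀ s ∈ Ioc 0 t, F t ^ (-(1:ℝ)/2) ≤ F s ^ (-(1:ℝ)/2) := fun s hs =>
    Real.rpow_le_rpow_of_nonpos (hFpos s hs.1) (hFmono hs.1 ht hs.2) (by norm_num)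
  have := setIntegral_ge_of_const_le_real measurableSet_Ioc (by simp) hle hint
  rwa [Real.volume_real_Ioc_of_le ht.le, sub_zero, rpow_neg_half_eq_inv_sqrt (hFpos t ht).le,
    ← div_eq_inv_mul, ← intervalIntegral.integral_of_le ht.le] at this

theorem tendsto_div_sqrt_mul_integral_rpow_neg_half (hF : ∀ x > 0, HasDerivAt F (f x) x)
    (hFc : Continuous F) (hFpos : ∀ x > 0, 0 < F x) (hFmono : MonotoneOn F (Ioi 0))
    (hint : ∀ t > 0, IntegrableOn (fun s => F s ^ (-(1:ℝ)/2)) (Ioc 0 t)) {ω : ℝ}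
    (hlim : Tendsto (fun t => t * f t / F t) (𝓝[>] 0) (𝓝 ω)) :
    Tendsto (fun t => t / (√(F t) * ∫ s in (0:ℝ)..t, F s ^ (-(1:ℝ)/2))) (𝓝[>] 0)
      (𝓝 (1 - ω/2)) := by
  have hG : Tendsto (fun t => ∫ s in (0:ℝ)..t, F s ^ (-(1:ℝ)/2)) (𝓝[>] 0) (𝓝 0) :=
    tendsto_integral_nhdsGT_zero (hint 1 one_pos)
  have hp : Tendsto (fun t => t / √(F t)) (𝓝[>] 0) (𝓝 0) :=
    squeeze_zero'
      (eventually_mem_nhdsWithin.mono fun t ht => div_nonneg ht.le (Real.sqrt_nonneg _))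
      (eventually_mem_nhdsWithin.mono fun t ht =>
        div_sqrt_le_integral_rpow_neg_half hFpos hFmono ht (hint t ht)) hG
  have hratio : Tendsto (fun x => (1 - x * f x / F x / 2) * (√(F x))⁻¹ / (√(F x))⁻¹)
      (𝓝[>] 0) (𝓝 (1 - ω/2)) :=
    (tendsto_const_nhds.sub (hlim.div_const 2)).congr' (eventually_mem_nhdsWithin.mono fun x hx =>
      (mul_div_cancel_right₀ _ (inv_ne_zero (Real.sqrt_pos.mpr (hFpos x hx)).ne')).symm)
  simpa only [div_div] using HasDerivAt.lhopital_zero_nhdsGT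
    (eventually_mem_nhdsWithin.mono fun x hx => hasDerivAt_div_sqrt (hF x hx) (hFpos x hx))
    (eventually_mem_nhdsWithin.mono fun x hx =>
      hasDerivAt_integral_rpow_neg_half hFc hFpos hint hx)
    (eventually_mem_nhdsWithin.mono fun x hx =>
      inv_ne_zero (Real.sqrt_pos.mpr (hFpos x hx)).ne') hp hG hratio

end SqrtPrimitive

theorem stmt1_general (f F h : ℝ → ℝ) (hf_cont : Continuous f) (hf_mono : StrictMono f)
    (hf0 : f 0 = 0)
    (hF : ∀ t, F t = ∫ s in (0:ℝ)..t, f s)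
    (hfin : ∀ t ≥ (0:ℝ), IntegrableOn (fun s => (F s) ^ (-(1:ℝ)/2)) (Set.Ioc 0 t) volume)
    (hh : ∀ t, h t = ∫ s in (0:ℝ)..t, (F s) ^ (-(1:ℝ)/2))
    (ω : ℝ)
    (hlim : Tendsto (fun t => t * f t / F t) (nhdsWithin 0 (Set.Ioi 0)) (nhds ω)) :
    Tendsto (fun t => t / (Real.sqrt (F t) * h t)) (nhdsWithin 0 (Set.Ioi 0))
      (nhds (1 - ω/2)) := by
  obtain rfl : F = _ := funext hF
  obtain rfl : h = _ := funext hh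
  have hpos : ∀ x > 0, 0 < f x := fun x hx => hf0 ▸ hf_mono hx
  have hderiv : ∀ x, HasDerivAt (fun t => ∫ s in (0:ℝ)..t, f s) (f x) x := fun x =>
    (hf_cont.integral_hasStrictDerivAt 0 x).hasDerivAt
  exact tendsto_div_sqrt_mul_integral_rpow_neg_half (fun x _ => hderiv x)
    (continuous_iff_continuousAt.2 fun x => (hderiv x).continuousAt)
    (fun t ht => integral_pos_of_pos_on_Ioi hf_cont hpos ht)
    (monotoneOn_integral_of_pos_on_Ioi hf_cont hpos) (fun t ht => hfin t ht.le) hlim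

/-- L'Hôpital-type limit: with `F t = ∫₀ᵗ f`, `h t = ∫₀ᵗ F(s)^{-1/2} ds` finite, and
`t f(t)/F(t) → ω ∈ [1,2)` as `t → 0⁺`, one has `t/(√(F t) · h t) → 1 - ω/2`. -/
theorem stmt1 (f F h : ℝ → ℝ) (hf_cont : Continuous f) (hf_mono : StrictMono f)
    (hf0 : f 0 = 0)
    (hF : ∀ t, F t = ∫ s in (0:ℝ)..t, f s)
    (hfin : ∀ t ≥ (0:ℝ), IntegrableOn (fun s => (F s) ^ (-(1:ℝ)/2)) (Set.Ioc 0 t) volume)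
    (hh : ∀ t, h t = ∫ s in (0:ℝ)..t, (F s) ^ (-(1:ℝ)/2))
    (ω : ℝ) (hω : ω ∈ Set.Ico (1:ℝ) 2)
    (hlim : Tendsto (fun t => t * f t / F t) (nhdsWithin 0 (Set.Ioi 0)) (nhds ω)) :
    Tendsto (fun t => t / (Real.sqrt (F t) * h t)) (nhdsWithin 0 (Set.Ioi 0))
      (nhds (1 - ω/2)) :=
  stmt1_general f F h hf_cont hf_mono hf0 hF hfin hh ω hlim
end

section
/- Let f : ℝ → ℝ be continuous, strictly increasing with f(0) = 0, F(t) = ∫₀ᵗ f(s) ds, h(t) = ∫₀ᵗ F(s)^(-1/2) ds finite for t ≥ 0, and assume lim_{t→0⁺} t·f(t)/F(t) = ω ∈ [1,2). Then lim_{t→0⁺} f(t)·h(t)/√(F(t)) = 2ω/(2-ω). -/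
open MeasureTheory Set Filter Topology

/-!
Put `g t = t F(t)^{-1/2}`. Then `f h / √F = (t f / F) · (h / g)`, and the first factor tends
to `ω`. Both `h` and `g` vanish at `0⁺`, so L'Hôpital applies to `h / g`: since
`h' = F^{-1/2}` and `g' = F^{-1/2} (1 - t f / (2F))`, the quotient `h' / g'` tends to
`1 / (1 - ω/2) = 2 / (2 - ω)`. That `g → 0` comes from `ω < 2`: for any `ρ ∈ (ω, 2)` the
inequality `t f < ρ F` makes `F(t) t^{-ρ}` decreasing near `0`, so `F(t) ≥ K t^ρ` and
`g(t) ≤ K^{-1/2} t^{1 - ρ/2}`.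
-/

section

variable {F f : ℝ → ℝ}

theorem antitoneOn_mul_rpow_neg {ρ b : ℝ} (hF : ∀ x ∈ Ioo 0 b, HasDerivAt F (f x) x)
    (hρ : ∀ x ∈ Ioo 0 b, x * f x ≤ ρ * F x) :
    AntitoneOn (fun x => F x * x ^ (-ρ)) (Ioo 0 b) := by
  have hφ : ∀ x ∈ Ioo 0 b,
      HasDerivAt (fun x => F x * x ^ (-ρ)) ((x * f x - ρ * F x) * x ^ (-ρ - 1)) x := by
    intro x hx
    have hx0 : x ≠ 0 := hx.1.ne'
    refine ((hF x hx).mul ((hasDerivAt_id x).rpow_const (p := -ρ) (Or.inl hx0))).congr_deriv ?_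
    simp only [id, Real.rpow_sub_one hx0]
    field_simp
    ring
  refine antitoneOn_of_deriv_nonpos (convex_Ioo 0 b)
    (fun x hx => (hφ x hx).continuousAt.continuousWithinAt) ?_ ?_ <;> rw [interior_Ioo]
  · exact fun x hx => (hφ x hx).differentiableAt.differentiableWithinAt
  · intro x hx
    rw [(hφ x hx).deriv]
    exact mul_nonpos_of_nonpos_of_nonneg (by linarith [hρ x hx]) (Real.rpow_nonneg hx.1.le _)

theorem exists_pos_mul_rpow_le {ρ : ℝ} (hF : ∀ᶠ x in 𝓝[>] 0, HasDerivAt F (f x) x)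
    (hFpos : ∀ᶠ x in 𝓝[>] 0, 0 < F x) (hρ : ∀ᶠ x in 𝓝[>] 0, x * f x / F x < ρ) :
    ∃ K > 0, ∀ᶠ x in 𝓝[>] 0, K * x ^ ρ ≤ F x := by
  obtain ⟨b, hb, hsub⟩ := mem_nhdsGT_iff_exists_Ioo_subset.1 (hF.and (hFpos.and hρ))
  have hanti : AntitoneOn (fun x => F x * x ^ (-ρ)) (Ioo 0 b) := by
    refine antitoneOn_mul_rpow_neg (fun x hx => (hsub hx).1) fun x hx => ?_
    obtain ⟨-, hpos, hlt⟩ := hsub hx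
    rw [div_lt_iff₀ hpos] at hlt
    exact hlt.le
  have hc : b / 2 ∈ Ioo 0 b := ⟨half_pos hb, half_lt_self hb⟩
  refine ⟨F (b / 2) * (b / 2) ^ (-ρ), mul_pos (hsub hc).2.1 (Real.rpow_pos_of_pos hc.1 _), ?_⟩
  filter_upwards [Ioo_mem_nhdsGT hc.1] with x hx
  calc F (b / 2) * (b / 2) ^ (-ρ) * x ^ ρ ≤ F x * x ^ (-ρ) * x ^ ρ :=
        mul_le_mul_of_nonneg_right (hanti ⟨hx.1, hx.2.trans hc.2⟩ hc hx.2.le)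
          (Real.rpow_nonneg hx.1.le _)
    _ = F x := by rw [mul_assoc, ← Real.rpow_add hx.1, neg_add_cancel, Real.rpow_zero, mul_one]

theorem tendsto_mul_rpow_neg_half_of_mul_rpow_le {ρ K : ℝ} (hK : 0 < K) (hρ : ρ < 2)
    (hKF : ∀ᶠ x in 𝓝[>] 0, K * x ^ ρ ≤ F x) :
    Tendsto (fun x => x * F x ^ (-(1:ℝ)/2)) (𝓝[>] 0) (𝓝 0) := by
  have hexp : 0 < 1 - ρ / 2 := by linarith
  have hbound : Tendsto (fun x : ℝ => K ^ (-(1:ℝ)/2) * x ^ (1 - ρ / 2)) (𝓝[>] 0) (𝓝 0) := by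
    have := (Real.continuousAt_rpow_const 0 _ (Or.inr hexp.le)).tendsto.const_mul
      (K ^ (-(1:ℝ)/2))
    rw [Real.zero_rpow hexp.ne', mul_zero] at this
    exact this.mono_left nhdsWithin_le_nhds
  refine tendsto_of_tendsto_of_tendsto_of_le_of_le' tendsto_const_nhds hbound ?_ ?_ <;>
    filter_upwards [self_mem_nhdsWithin, hKF] with x (hx : 0 < x) hKx
  · have : 0 < F x := (by positivity : 0 < K * x ^ ρ).trans_le hKx
    positivity
  · calc x * F x ^ (-(1:ℝ)/2) ≤ x * (K * x ^ ρ) ^ (-(1:ℝ)/2) :=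
          mul_le_mul_of_nonneg_left
            (Real.rpow_le_rpow_of_nonpos (by positivity) hKx (by norm_num)) hx.le
      _ = K ^ (-(1:ℝ)/2) * x ^ (1 - ρ / 2) := by
          rw [Real.mul_rpow hK.le (by positivity), ← Real.rpow_mul hx.le,
            show 1 - ρ / 2 = 1 + ρ * (-(1:ℝ)/2) by ring, Real.rpow_add hx, Real.rpow_one]
          ring

theorem hasDerivAt_mul_rpow_neg_half {x : ℝ}
    (hF : HasDerivAt F (f x) x) (hFx : 0 < F x) :
    HasDerivAt (fun x => x * F x ^ (-(1:ℝ)/2))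
      (F x ^ (-(1:ℝ)/2) * (1 - x * f x / F x / 2)) x := by
  refine ((hasDerivAt_id x).mul
    (hF.rpow_const (p := -(1:ℝ)/2) (Or.inl hFx.ne'))).congr_deriv ?_
  rw [Real.rpow_sub_one hFx.ne', id]
  field_simp
  ring

theorem tendsto_div_mul_rpow_neg_half {h : ℝ → ℝ} {ω : ℝ} (hω : ω < 2)
    (hF : ∀ᶠ x in 𝓝[>] 0, HasDerivAt F (f x) x) (hFpos : ∀ᶠ x in 𝓝[>] 0, 0 < F x)
    (hh : ∀ᶠ x in 𝓝[>] 0, HasDerivAt h (F x ^ (-(1:ℝ)/2)) x)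
    (hh0 : Tendsto h (𝓝[>] 0) (𝓝 0))
    (hlim : Tendsto (fun x => x * f x / F x) (𝓝[>] 0) (𝓝 ω)) :
    Tendsto (fun x => h x / (x * F x ^ (-(1:ℝ)/2))) (𝓝[>] 0) (𝓝 (2 / (2 - ω))) := by
  obtain ⟨K, hK, hKF⟩ :=
    exists_pos_mul_rpow_le hF hFpos (hlim.eventually_lt_const (by linarith : ω < (ω + 2) / 2))
  have hg0 := tendsto_mul_rpow_neg_half_of_mul_rpow_le hK (by linarith) hKF
  have hratio : Tendsto (fun x => 1 / (1 - x * f x / F x / 2)) (𝓝[>] 0) (𝓝 (1 / (1 - ω / 2))) :=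
    tendsto_const_nhds.div (tendsto_const_nhds.sub (hlim.div_const 2)) (by linarith)
  rw [show 1 / (1 - ω / 2) = 2 / (2 - ω) by field_simp] at hratio
  refine HasDerivAt.lhopital_zero_nhdsGT
    (g' := fun x => F x ^ (-(1:ℝ)/2) * (1 - x * f x / F x / 2)) hh ?_ ?_ hh0 hg0 (hratio.congr' ?_)
  · filter_upwards [hF, hFpos] with x hx hpos using hasDerivAt_mul_rpow_neg_half hx hpos
  · filter_upwards [hFpos, hlim.eventually_lt_const hω] with x hpos hlt
    have : 0 < 1 - x * f x / F x / 2 := by linarith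
    exact (mul_pos (Real.rpow_pos_of_pos hpos _) this).ne'
  · filter_upwards [hFpos] with x hpos
    rw [div_mul_cancel_left₀ (Real.rpow_pos_of_pos hpos _).ne', one_div]

end

theorem tendsto_intervalIntegral_zero_nhdsGT {G : ℝ → ℝ} {b : ℝ} (hb : 0 < b)
    (hG : IntegrableOn G (Ioc 0 b)) :
    Tendsto (fun x => ∫ s in (0:ℝ)..x, G s) (𝓝[>] 0) (𝓝 0) := by
  have hcont := intervalIntegral.continuousOn_primitive_interval' (a := 0)
    ((intervalIntegrable_iff_integrableOn_Ioc_of_le hb.le).2 hG) left_mem_uIcc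
    0 left_mem_uIcc
  rw [uIcc_of_le hb.le] at hcont
  simpa using hcont.tendsto.mono_left (nhdsWithin_le_of_mem (Icc_mem_nhdsGT hb))

/-- With `F t = ∫₀ᵗ f`, `h t = ∫₀ᵗ F(s)^{-1/2} ds` finite, and `t f(t)/F(t) → ω ∈ [1,2)`
as `t → 0⁺`, one has `f(t) h(t)/√(F t) → 2ω/(2-ω)`. -/
theorem stmt2 (f F h : ℝ → ℝ) (hf_cont : Continuous f) (hf_mono : StrictMono f)
    (hf0 : f 0 = 0)
    (hF : ∀ t, F t = ∫ s in (0:ℝ)..t, f s)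
    (hfin : ∀ t ≥ (0:ℝ), IntegrableOn (fun s => (F s) ^ (-(1:ℝ)/2)) (Set.Ioc 0 t) volume)
    (hh : ∀ t, h t = ∫ s in (0:ℝ)..t, (F s) ^ (-(1:ℝ)/2))
    (ω : ℝ) (hω : ω ∈ Set.Ico (1:ℝ) 2)
    (hlim : Tendsto (fun t => t * f t / F t) (nhdsWithin 0 (Set.Ioi 0)) (nhds ω)) :
    Tendsto (fun t => f t * h t / Real.sqrt (F t)) (nhdsWithin 0 (Set.Ioi 0))
      (nhds (2 * ω / (2 - ω))) := by
  have hFf : ∀ t, HasDerivAt F (f t) t := fun t => by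
    rw [show F = _ from funext hF]
    exact (hf_cont.integral_hasStrictDerivAt 0 t).hasDerivAt
  have hFpos : ∀ t > 0, 0 < F t := fun t ht => by
    rw [hF]
    exact intervalIntegral.intervalIntegral_pos_of_pos_on (hf_cont.intervalIntegrable 0 t)
      (fun x hx => hf0 ▸ hf_mono hx.1) ht
  have hGcont : ContinuousOn (fun s => F s ^ (-(1:ℝ)/2)) (Ioi 0) := fun t ht =>
    ((Real.continuousAt_rpow_const _ _ (Or.inl (hFpos t ht).ne')).comp
      (hFf t).continuousAt).continuousWithinAt
  have hh' : ∀ t > 0, HasDerivAt h (F t ^ (-(1:ℝ)/2)) t := fun t ht => by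
    rw [show h = _ from funext hh]
    exact intervalIntegral.integral_hasDerivAt_right
      ((intervalIntegrable_iff_integrableOn_Ioc_of_le ht.le).2 (hfin t ht.le))
      (hGcont.stronglyMeasurableAtFilter isOpen_Ioi t ht)
      (hGcont.continuousAt (Ioi_mem_nhds ht))
  have hh0 : Tendsto h (𝓝[>] 0) (𝓝 0) := by
    rw [show h = _ from funext hh]
    exact tendsto_intervalIntegral_zero_nhdsGT one_pos (hfin 1 zero_le_one)
  have hlhop := tendsto_div_mul_rpow_neg_half hω.2 (.of_forall hFf)
    (eventually_mem_nhdsWithin.mono hFpos) (eventually_mem_nhdsWithin.mono hh') hh0 hlim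
  rw [show 2 * ω / (2 - ω) = ω * (2 / (2 - ω)) by ring]
  refine (hlim.mul hlhop).congr' ?_
  filter_upwards [self_mem_nhdsWithin] with t (ht : 0 < t)
  have hFt := hFpos t ht
  have hsqrt : 0 < √(F t) := Real.sqrt_pos.2 hFt
  rw [Real.rpow_div_two_eq_sqrt _ hFt.le, Real.rpow_neg_one]
  field_simp
  rw [Real.sq_sqrt hFt.le]
  ring
end

section
/- Let f : ℝ → ℝ be continuous, strictly increasing with f(0)=0, F(t) = ∫₀ᵗ f(s) ds, and h(t) = ∫₀ᵗ F(s)^(-1/2) ds finite for all t ≥ 0. Define U : [0,∞) → [0,∞) by U(t) = h⁻¹(√2 · t). Then U is twice differentiable on (0,∞), satisfies U''(t) = f(U(t)) for all t > 0, U(0) = 0, and (U'(t))² = 2F(U(t)). -/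
open MeasureTheory Set

/-!
Since `f > 0` on `(0, ∞)`, the primitive `F` is positive there and `h` is strictly increasing on
`[0, ∞)`, with `h' = F^(-1/2)` at positive points. Hence `U` is strictly increasing, maps `(0, ∞)`
onto itself and is therefore continuous there, so the inverse function theorem gives
`U' = √2 / h'(U) = √(2 F(U))`. Differentiating this energy identity once more with `F' = f` yields
`U'' = f(U)`.
-/

open Filter Topology

section IntegralFromZero

variable {g : ℝ → ℝ}

theorem intervalIntegrable_of_integrableOn_Ioc_zero
    (hg : ∀ t ≥ (0:ℝ), IntegrableOn g (Ioc 0 t)) {a b : ℝ} (ha : 0 ≤ a) (hab : a ≤ b) :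
    IntervalIntegrable g volume a b := by
  rw [intervalIntegrable_iff, uIoc_of_le hab]
  exact (hg b (ha.trans hab)).mono_set (Ioc_subset_Ioc_left ha)

theorem strictMonoOn_integral_of_pos (hg : ∀ t ≥ (0:ℝ), IntegrableOn g (Ioc 0 t))
    (hpos : ∀ s > (0:ℝ), 0 < g s) :
    StrictMonoOn (fun t => ∫ s in (0:ℝ)..t, g s) (Ici 0) := by
  intro a ha b _ hab
  have hab_int := intervalIntegrable_of_integrableOn_Ioc_zero hg ha hab.le
  have hsplit := intervalIntegral.integral_add_adjacent_intervals
    (intervalIntegrable_of_integrableOn_Ioc_zero hg le_rfl ha) hab_int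
  have hpiece : 0 < ∫ s in a..b, g s :=
    intervalIntegral.intervalIntegral_pos_of_pos_on hab_int
      (fun x hx => hpos x (lt_of_le_of_lt ha hx.1)) hab
  dsimp only
  linarith

theorem hasDerivAt_integral_of_continuousOn_Ioi (hg : ∀ t ≥ (0:ℝ), IntegrableOn g (Ioc 0 t))
    (hcont : ContinuousOn g (Ioi 0)) {v : ℝ} (hv : 0 < v) :
    HasDerivAt (fun t => ∫ s in (0:ℝ)..t, g s) (g v) v :=
  intervalIntegral.integral_hasDerivAt_right
    (intervalIntegrable_of_integrableOn_Ioc_zero hg le_rfl hv.le)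
    (hcont.stronglyMeasurableAtFilter isOpen_Ioi v hv)
    (hcont.continuousAt (Ioi_mem_nhds hv))

end IntegralFromZero

theorem integral_pos_of_strictMono {f : ℝ → ℝ} (hf_cont : Continuous f) (hf_mono : StrictMono f)
    (hf0 : f 0 = 0) {s : ℝ} (hs : 0 < s) : 0 < ∫ x in (0:ℝ)..s, f x :=
  intervalIntegral.intervalIntegral_pos_of_pos_on (hf_cont.intervalIntegrable 0 s)
    (fun _ hx => hf0 ▸ hf_mono hx.1) hs

section RightInverse

variable {h U : ℝ → ℝ} {c : ℝ}

theorem eq_zero_of_comp_eq_mul (hmono : StrictMonoOn h (Ici 0)) (h0 : h 0 = 0)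
    (hU_nonneg : ∀ t ≥ (0:ℝ), 0 ≤ U t) (hU_inv : ∀ t ≥ (0:ℝ), h (U t) = c * t) : U 0 = 0 :=
  hmono.injOn (hU_nonneg 0 le_rfl) self_mem_Ici (by rw [hU_inv 0 le_rfl, h0, mul_zero])

theorem strictMonoOn_of_comp_eq_mul (hc : 0 < c) (hmono : StrictMonoOn h (Ici 0))
    (hU_nonneg : ∀ t ≥ (0:ℝ), 0 ≤ U t) (hU_inv : ∀ t ≥ (0:ℝ), h (U t) = c * t) :
    StrictMonoOn U (Ici 0) := by
  intro a ha b hb hab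
  rw [← hmono.lt_iff_lt (hU_nonneg a ha) (hU_nonneg b hb), hU_inv a ha, hU_inv b hb]
  exact mul_lt_mul_of_pos_left hab hc

theorem Ioi_subset_image_of_comp_eq_mul (hc : 0 < c) (hmono : StrictMonoOn h (Ici 0))
    (h0 : h 0 = 0) (hU_nonneg : ∀ t ≥ (0:ℝ), 0 ≤ U t)
    (hU_inv : ∀ t ≥ (0:ℝ), h (U t) = c * t) : Ioi 0 ⊆ U '' Ioi 0 := by
  intro y hy
  rw [mem_Ioi] at hy
  have hhy : 0 < h y := h0 ▸ hmono self_mem_Ici (mem_Ici.2 hy.le) hy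
  have ht : 0 ≤ h y / c := (div_pos hhy hc).le
  refine ⟨h y / c, div_pos hhy hc, hmono.injOn (hU_nonneg _ ht) (mem_Ici.2 hy.le) ?_⟩
  rw [hU_inv _ ht, mul_div_cancel₀ _ hc.ne']

theorem pos_of_comp_eq_mul (hc : 0 < c) (hmono : StrictMonoOn h (Ici 0)) (h0 : h 0 = 0)
    (hU_nonneg : ∀ t ≥ (0:ℝ), 0 ≤ U t) (hU_inv : ∀ t ≥ (0:ℝ), h (U t) = c * t) {t : ℝ}
    (ht : 0 < t) : 0 < U t :=
  eq_zero_of_comp_eq_mul hmono h0 hU_nonneg hU_inv ▸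
    strictMonoOn_of_comp_eq_mul hc hmono hU_nonneg hU_inv self_mem_Ici (mem_Ici.2 ht.le) ht

theorem continuousAt_of_comp_eq_mul (hc : 0 < c) (hmono : StrictMonoOn h (Ici 0))
    (h0 : h 0 = 0) (hU_nonneg : ∀ t ≥ (0:ℝ), 0 ≤ U t)
    (hU_inv : ∀ t ≥ (0:ℝ), h (U t) = c * t) {t : ℝ} (ht : 0 < t) : ContinuousAt U t :=
  ((strictMonoOn_of_comp_eq_mul hc hmono hU_nonneg hU_inv).mono
    Ioi_subset_Ici_self).continuousAt_of_image_mem_nhds (Ioi_mem_nhds ht)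
    (mem_of_superset (Ioi_mem_nhds (pos_of_comp_eq_mul hc hmono h0 hU_nonneg hU_inv ht))
      (Ioi_subset_image_of_comp_eq_mul hc hmono h0 hU_nonneg hU_inv))

theorem hasDerivAt_of_comp_eq_mul (hc : 0 < c) (hmono : StrictMonoOn h (Ici 0))
    (h0 : h 0 = 0) (hU_nonneg : ∀ t ≥ (0:ℝ), 0 ≤ U t)
    (hU_inv : ∀ t ≥ (0:ℝ), h (U t) = c * t) {t h' : ℝ} (ht : 0 < t)
    (hh' : HasDerivAt h h' (U t)) (hh'0 : h' ≠ 0) : HasDerivAt U (c / h') t := by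
  have hleft : ∀ᶠ x in 𝓝 t, h (U x) / c = x := by
    filter_upwards [Ioi_mem_nhds ht] with x hx
    rw [hU_inv x (le_of_lt hx), mul_div_cancel_left₀ _ hc.ne']
  simpa using (hh'.div_const c).of_local_left_inverse
    (continuousAt_of_comp_eq_mul hc hmono h0 hU_nonneg hU_inv ht) (div_ne_zero hh'0 hc.ne') hleft

end RightInverse

theorem sqrt_two_div_rpow_neg_half {x : ℝ} (hx : 0 ≤ x) :
    √2 / x ^ (-(1:ℝ)/2) = √(2 * x) := by
  rw [Real.sqrt_mul zero_le_two, Real.sqrt_eq_rpow x, neg_div, Real.rpow_neg hx, div_inv_eq_mul]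

theorem hasDerivAt_sqrt_two_mul_comp {f F U : ℝ → ℝ} {t : ℝ}
    (hU : HasDerivAt U √(2 * F (U t)) t) (hF : HasDerivAt F (f (U t)) (U t))
    (hpos : 0 < F (U t)) : HasDerivAt (fun x => √(2 * F (U x))) (f (U t)) t := by
  have hsqrt : √(2 * F (U t)) ≠ 0 := by positivity
  convert ((hF.comp t hU).const_mul 2).sqrt (by positivity) using 1 <;>
    simp only [Function.comp_apply]
  field_simp

/-- The one-dimensional profile `U = h⁻¹(√2 t)` solves `U'' = f(U)`, `U(0) = 0`,
and `(U')² = 2 F(U)`. Here `h` being the inverse is encoded by `h (U t) = √2 t`. -/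
theorem stmt4 (f F h U : ℝ → ℝ) (hf_cont : Continuous f) (hf_mono : StrictMono f)
    (hf0 : f 0 = 0)
    (hF : ∀ t, F t = ∫ s in (0:ℝ)..t, f s)
    (hfin : ∀ t ≥ (0:ℝ), IntegrableOn (fun s => (F s) ^ (-(1:ℝ)/2)) (Set.Ioc 0 t) volume)
    (hh : ∀ t, h t = ∫ s in (0:ℝ)..t, (F s) ^ (-(1:ℝ)/2))
    (hU_nonneg : ∀ t ≥ (0:ℝ), 0 ≤ U t)
    (hU_inv : ∀ t ≥ (0:ℝ), h (U t) = Real.sqrt 2 * t) :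
    U 0 = 0 ∧
    ∃ U' : ℝ → ℝ, ∀ t > (0:ℝ),
      HasDerivAt U (U' t) t ∧ HasDerivAt U' (f (U t)) t ∧ (U' t) ^ 2 = 2 * F (U t) := by
  have hFpos : ∀ s > (0:ℝ), 0 < F s := fun s hs =>
    hF s ▸ integral_pos_of_strictMono hf_cont hf_mono hf0 hs
  have hFderiv : ∀ s, HasDerivAt F (f s) s := fun s =>
    funext hF ▸ (hf_cont.integral_hasStrictDerivAt 0 s).hasDerivAt
  have hmono : StrictMonoOn h (Ici 0) := funext hh ▸
    strictMonoOn_integral_of_pos hfin fun s hs => Real.rpow_pos_of_pos (hFpos s hs) _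
  have h0 : h 0 = 0 := (hh 0).trans intervalIntegral.integral_same
  have hcont : ContinuousOn (fun s => F s ^ (-(1:ℝ)/2)) (Ioi 0) := fun s hs =>
    ((hFderiv s).continuousAt.rpow_const (Or.inl (hFpos s hs).ne')).continuousWithinAt
  have hsqrt2 : (0:ℝ) < √2 := by positivity
  refine ⟨eq_zero_of_comp_eq_mul hmono h0 hU_nonneg hU_inv, fun t => √(2 * F (U t)), fun t ht => ?_⟩
  have hUt := pos_of_comp_eq_mul hsqrt2 hmono h0 hU_nonneg hU_inv ht
  have hU' : HasDerivAt U √(2 * F (U t)) t := by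
    rw [← sqrt_two_div_rpow_neg_half (hFpos _ hUt).le]
    exact hasDerivAt_of_comp_eq_mul hsqrt2 hmono h0 hU_nonneg hU_inv ht
      (funext hh ▸ hasDerivAt_integral_of_continuousOn_Ioi hfin hcont hUt)
      (Real.rpow_pos_of_pos (hFpos _ hUt) _).ne'
  exact ⟨hU', hasDerivAt_sqrt_two_mul_comp hU' (hFderiv _) (hFpos _ hUt),
    Real.sq_sqrt (by positivity [hFpos _ hUt])⟩
end
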